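/- Let V be a complete discrete valuation ring with uniformiser π, let D be an associative (not necessarily commutative) V-algebra, and let S ⊆ D be a V-submodule whose image in D/π^k D is a finitely generated V-module for every k ∈ ℕ. Then the V-submodule S₁ := Σ_{n=0}^∞ π^n S^{n+1} of D (the V-submodule generated by all products π^n s₀ s₁ ⋯ s_n with n ∈ ℕ and s₀, …, s_n ∈ S) also has finitely generated image in D/π^k D for every k ∈ ℕ. (This is the Banach-algebra form of Lemma 4.7: if a bornological V-algebra D is semidagger, then so is D with the compactoid bornology; S₁ is the submodule of linear growth generated by S.) -/

import Mathlib

open Pointwise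

/-- `S` is a compactoid submodule of `D`: for every `k`, the image of `S` in
`D/π^k D` is finitely generated, i.e. there is a finite `F_k ⊆ D` with
`S ⊆ V·F_k + π^k D`. -/
def CompactoidIn {V : Type*} [CommRing V] (π : V) {D : Type*} [AddCommGroup D]
    [Module V D] (S : Submodule V D) : Prop :=
  ∀ k : ℕ, ∃ F : Finset D,
    S ≤ Submodule.span V (F : Set D) ⊔ π ^ k • (⊤ : Submodule V D)

/-! Modulo `πᵏ` the summands `πⁿ S^{n+1}` with `n ≥ k` vanish. For `n < k`, expanding
`S^{n+1} ⊆ (V·F + πᵏD)^{n+1}` and using that `πᵏD` is a two-sided ideal, every mixed product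
falls into `πᵏD`, so `πⁿ S^{n+1} ⊆ V·πⁿF^{n+1} + πᵏD`. Hence the finitely many finite sets
`πⁿF^{n+1}`, `n < k`, generate `S₁` modulo `πᵏ`. -/

namespace Submodule

section Module

variable {R M : Type*} [CommSemiring R] [AddCommMonoid M] [Module R M]

theorem smul_smul_top_le (a b : R) : b • (a • ⊤ : Submodule R M) ≤ a • ⊤ := by
  rw [smul_comm]
  exact smul_mono_right _ le_top

theorem pow_smul_le_pow_smul_top (π : R) {k n : ℕ} (hkn : k ≤ n) (N : Submodule R M) :
    π ^ n • N ≤ π ^ k • ⊤ := by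
  rw [← Nat.add_sub_cancel' hkn, pow_add, mul_smul]
  exact smul_mono_right _ le_top

end Module

section Algebra

variable {R A : Type*} [CommSemiring R] [Semiring A] [Algebra R A]

theorem smul_top_mul_le (a : R) (M : Submodule R A) : (a • ⊤ : Submodule R A) * M ≤ a • ⊤ := by
  refine mul_le.2 fun x hx y _ => ?_
  obtain ⟨d, -, rfl⟩ := (mem_smul_pointwise_iff_exists _ _ _).1 hx
  rw [smul_mul_assoc]
  exact smul_mem_pointwise_smul _ _ _ mem_top

theorem mul_smul_top_le (a : R) (M : Submodule R A) : M * (a • ⊤ : Submodule R A) ≤ a • ⊤ := by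
  refine mul_le.2 fun x _ y hy => ?_
  obtain ⟨d, -, rfl⟩ := (mem_smul_pointwise_iff_exists _ _ _).1 hy
  rw [mul_smul_comm]
  exact smul_mem_pointwise_smul _ _ _ mem_top

theorem sup_pow_succ_le {I : Submodule R A} (hl : ∀ M, I * M ≤ I) (hr : ∀ M, M * I ≤ I)
    (N : Submodule R A) : ∀ n : ℕ, (N ⊔ I) ^ (n + 1) ≤ N ^ (n + 1) ⊔ I
  | 0 => by simp
  | n + 1 =>
    calc (N ⊔ I) ^ (n + 2) = (N ⊔ I) ^ (n + 1) * (N ⊔ I) := pow_succ _ _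
      _ ≤ (N ^ (n + 1) ⊔ I) * (N ⊔ I) := mul_le_mul' (sup_pow_succ_le hl hr N n) le_rfl
      _ = N ^ (n + 1) * N ⊔ N ^ (n + 1) * I ⊔ (I * N ⊔ I * I) := by
        rw [sup_mul, mul_sup, mul_sup]
      _ ≤ N ^ (n + 2) ⊔ I := by
        rw [← pow_succ]
        exact sup_le (sup_le le_sup_left (le_sup_of_le_right (hr _)))
          (le_sup_of_le_right (sup_le (hl _) (hl _)))

theorem pow_smul_pow_succ_le_span_sup {π : R} {k : ℕ} {S : Submodule R A} {F : Set A}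
    (hF : S ≤ span R F ⊔ π ^ k • ⊤) (n : ℕ) :
    π ^ n • S ^ (n + 1) ≤ span R (π ^ n • F ^ (n + 1)) ⊔ π ^ k • ⊤ :=
  calc π ^ n • S ^ (n + 1)
      ≤ π ^ n • (span R F ^ (n + 1) ⊔ π ^ k • ⊤) :=
        smul_mono_right _ ((pow_le_pow_left' hF _).trans
          (sup_pow_succ_le (smul_top_mul_le _) (mul_smul_top_le _) _ _))
    _ ≤ span R (π ^ n • F ^ (n + 1)) ⊔ π ^ k • ⊤ := by
        rw [smul_sup', span_pow, smul_span]
        exact sup_le_sup_left (smul_smul_top_le _ _) _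

end Algebra

end Submodule

theorem compactoidIn_linear_growth_general
    {V : Type*} [CommRing V]
    (π : V)
    {D : Type*} [Ring D] [Algebra V D]
    (S : Submodule V D) (hS : CompactoidIn π S) :
    CompactoidIn π (⨆ n : ℕ, π ^ n • S ^ (n + 1)) := by
  classical
  intro k
  obtain ⟨F, hF⟩ := hS k
  refine ⟨(Finset.range k).biUnion fun n => π ^ n • F ^ (n + 1), iSup_le fun n => ?_⟩
  rcases lt_or_ge n k with hn | hn
  · refine (Submodule.pow_smul_pow_succ_le_span_sup hF n).trans (sup_le_sup_right ?_ _)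
    refine Submodule.span_mono ?_
    simp only [Finset.coe_biUnion, Finset.coe_smul_finset, Finset.coe_pow]
    exact Set.subset_biUnion_of_mem (u := fun n => π ^ n • (F : Set D) ^ (n + 1))
      (Finset.mem_coe.2 (Finset.mem_range.2 hn))
  · exact (Submodule.pow_smul_le_pow_smul_top π hn _).trans le_sup_right

/-- Banach-algebra form of Lemma 4.7 (semidagger passes to the compactoid bornology):
if `S` is a compactoid `V`-submodule of an associative `V`-algebra `D`, then the
submodule of linear growth `S₁ = Σ_{n≥0} πⁿ S^{n+1}` generated by `S` is again
compactoid. -/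
theorem compactoidIn_linear_growth
    {V : Type*} [CommRing V] [IsDomain V] [IsDiscreteValuationRing V]
    (π : V) (hπ : Irreducible π) [IsAdicComplete (Ideal.span {π}) V]
    {D : Type*} [Ring D] [Algebra V D]
    (S : Submodule V D) (hS : CompactoidIn π S) :
    CompactoidIn π (⨆ n : ℕ, π ^ n • S ^ (n + 1)) :=
  compactoidIn_linear_growth_general π S hS
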